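/- (Theorem 2, uniform boundedness.) For all n ∈ ℕ₀ and all y ∈ ℝ^d, q_n(y) ≤ h(y), where q_n = D^n(max(g, 0)). -/

import Mathlib

open Finset

/-- The weighted arithmetic average operator:
`(A f)(y) = ∑ k, α k * f (y - x k)`. -/
noncomputable def avgOp (d m : ℕ) (α : Fin m → ℝ) (x : Fin m → (Fin d → ℝ))
    (f : (Fin d → ℝ) → ℝ) : (Fin d → ℝ) → ℝ :=
  fun y => ∑ k, α k * f (y - x k)

/-- The Bermudan iteration operator: `(D f)(y) = max (c * (A f)(y)) (g y)`. -/
noncomputable def bermOp (d m : ℕ) (α : Fin m → ℝ) (x : Fin m → (Fin d → ℝ))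
    (c : ℝ) (g : (Fin d → ℝ) → ℝ) (f : (Fin d → ℝ) → ℝ) : (Fin d → ℝ) → ℝ :=
  fun y => max (c * avgOp d m α x f y) (g y)

/-! A nonnegative superharmonic majorant `h` of the obstacle `g` bounds every iterate of the
Bermudan operator started below it: since `c ≤ 1` and `A` is monotone,
`c * A f ≤ A h ≤ h` whenever `f ≤ h`, and `g ≤ h` handles the other branch of the maximum. -/

section

variable {d m : ℕ} {α : Fin m → ℝ} {x : Fin m → (Fin d → ℝ)}

theorem avgOp_mono (hα : ∀ k, 0 ≤ α k) : Monotone (avgOp d m α x) :=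
  fun _ _ hf _ => sum_le_sum fun k _ => mul_le_mul_of_nonneg_left (hf _) (hα k)

theorem bermOp_le_of_superharmonic {c : ℝ} {g h f : (Fin d → ℝ) → ℝ}
    (hα : ∀ k, 0 ≤ α k) (hc₀ : 0 ≤ c) (hc₁ : c ≤ 1)
    (hh : avgOp d m α x h ≤ h) (h_nonneg : 0 ≤ h) (hgh : g ≤ h) (hf : f ≤ h) :
    bermOp d m α x c g f ≤ h := fun y =>
  max_le
    (calc c * avgOp d m α x f y ≤ c * h y :=
          mul_le_mul_of_nonneg_left ((avgOp_mono hα hf y).trans (hh y)) hc₀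
      _ ≤ h y := mul_le_of_le_one_left (h_nonneg y) hc₁)
    (hgh y)

end

theorem q_le_h_general (d m : ℕ)
    (α : Fin m → ℝ) (hα : ∀ k, α k ∈ Set.Icc (0:ℝ) 1)
    (x : Fin m → (Fin d → ℝ))
    (c : ℝ) (hc : c ∈ Set.Ioo (0:ℝ) 1)
    (g h : (Fin d → ℝ) → ℝ)
    (hh : ∀ y, avgOp d m α x h y = h y)
    (hgh : ∀ y, max 0 (g y) ≤ h y)
    (q : ℕ → (Fin d → ℝ) → ℝ)
    (hq : ∀ n, q n = (bermOp d m α x c g)^[n] (fun y => max (g y) 0)) :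
    ∀ n : ℕ, ∀ y, q n y ≤ h y := by
  have h_nonneg : 0 ≤ h := fun y => (le_max_left _ _).trans (hgh y)
  have hg_le : g ≤ h := fun y => (le_max_right _ _).trans (hgh y)
  have hD : Set.MapsTo (bermOp d m α x c g) (Set.Iic h) (Set.Iic h) := fun _ hf =>
    bermOp_le_of_superharmonic (fun k => (hα k).1) hc.1.le hc.2.le (fun y => (hh y).le)
      h_nonneg hg_le hf
  intro n
  rw [hq n]
  exact hD.iterate n fun y => max_le (hg_le y) (h_nonneg y)

/-- Theorem 2, uniform boundedness: `q_n ≤ h` pointwise. -/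
theorem q_le_h (d m : ℕ) (hm : 1 ≤ m)
    (α : Fin m → ℝ) (hα : ∀ k, α k ∈ Set.Icc (0:ℝ) 1) (hsum : ∑ k, α k = 1)
    (x : Fin m → (Fin d → ℝ))
    (c : ℝ) (hc : c ∈ Set.Ioo (0:ℝ) 1)
    (g h : (Fin d → ℝ) → ℝ)
    (hg : ∀ y, g y ≤ avgOp d m α x g y)
    (hh : ∀ y, avgOp d m α x h y = h y)
    (hgh : ∀ y, max 0 (g y) ≤ h y)
    (q : ℕ → (Fin d → ℝ) → ℝ)
    (hq : ∀ n, q n = (bermOp d m α x c g)^[n] (fun y => max (g y) 0)) :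
    ∀ n : ℕ, ∀ y, q n y ≤ h y :=
  q_le_h_general d m α hα x c hc g h hh hgh q hq
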